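/- For all positive integers n and all integers t ≥ 2, the local t-dimension of the n-element chain equals ⌈log_t n⌉. -/

import Mathlib

open Classical Finset Real
open scoped Classical

noncomputable section

/-- A monotone partial function from `P` to the `t`-element chain,
encoded as a function into `Option (Fin t)` (`none` = outside the domain). -/
def MonotonePartial {P : Type*} [PartialOrder P] {t : ℕ} (f : P → Option (Fin t)) : Prop :=
  ∀ ⦃x y : P⦄, x ≤ y → ∀ ⦃a b : Fin t⦄, f x = some a → f y = some b → a ≤ b

/-- `f` separates the pair `(x, y)`: both are in the domain and `f x < f y`. -/
def Separates {P : Type*} {t : ℕ} (f : P → Option (Fin t)) (x y : P) : Prop :=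
  ∃ a b : Fin t, f x = some a ∧ f y = some b ∧ a < b

/-- A local `t`-realiser: a set of monotone partial functions into the `t`-chain
separating every pair `x ≱ y`. -/
def IsLocalRealiser {P : Type*} [PartialOrder P] {t : ℕ}
    (L : Finset (P → Option (Fin t))) : Prop :=
  (∀ f ∈ L, MonotonePartial f) ∧ ∀ x y : P, ¬ y ≤ x → ∃ f ∈ L, Separates f x y

/-- The multiplicity of `x` in `L`: the number of members of `L` whose domain contains `x`. -/
def mult {P : Type*} {t : ℕ} (L : Finset (P → Option (Fin t))) (x : P) : ℕ :=
  (L.filter fun f => (f x).isSome).card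

/-- The local `t`-dimension: minimal possible maximum multiplicity of a local `t`-realiser. -/
def ltdim (t : ℕ) (P : Type*) [PartialOrder P] : ℕ :=
  sInf {d | ∃ L : Finset (P → Option (Fin t)), IsLocalRealiser L ∧ ∀ x, mult L x ≤ d}

/-!
Upper bound: for `n ≤ t ^ d` write the points in base `t`. For each digit position `k < d` and each
value `b` of the digits above `k`, reading digit `k` on the block "digits above `k` spell `b`" is a
monotone partial function; every point lies in one block per `k`, so has multiplicity `d`, and
`x < y` are separated at the most significant digit where they differ.

Lower bound: a local realiser distinguishes any two points, and every family of partial functions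
into a `t`-element set that distinguishes the points of `C` satisfies Kraft's inequality
`∑_{x ∈ C} t ^ (-mult x) ≤ 1`, whence `n ≤ t ^ d`. Kraft's inequality is proved by removing one
function `f`: the others still distinguish each block `{f = none} ∪ {f = v}`, and the `t` inequalities
for these blocks add up to `t` times the one for `C`.
-/

def Distinguishes {α : Type*} {t : ℕ} (f : α → Option (Fin t)) (x y : α) : Prop :=
  ∃ a b : Fin t, f x = some a ∧ f y = some b ∧ a ≠ b

section Kraft

variable {α : Type*} {t : ℕ}

lemma Distinguishes.symm {f : α → Option (Fin t)} {x y : α} (h : Distinguishes f x y) :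
    Distinguishes f y x :=
  let ⟨a, b, hx, hy, hab⟩ := h
  ⟨b, a, hy, hx, hab.symm⟩

lemma Separates.distinguishes {f : α → Option (Fin t)} {x y : α} (h : Separates f x y) :
    Distinguishes f x y :=
  let ⟨a, b, hx, hy, hab⟩ := h
  ⟨a, b, hx, hy, hab.ne⟩

lemma mult_empty (x : α) : mult (∅ : Finset (α → Option (Fin t))) x = 0 := rfl

lemma mult_insert {L : Finset (α → Option (Fin t))} {f : α → Option (Fin t)} (hf : f ∉ L)
    (x : α) : mult (insert f L) x = mult L x + if (f x).isSome then 1 else 0 := by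
  unfold mult
  rw [Finset.filter_insert]
  split_ifs with hx
  · exact Finset.card_insert_of_notMem fun h => hf (Finset.mem_filter.mp h).1
  · rfl

theorem sum_inv_pow_mult_le_one (ht : 0 < t) (L : Finset (α → Option (Fin t)))
    (C : Finset α) (hC : (C : Set α).Pairwise fun x y => ∃ f ∈ L, Distinguishes f x y) :
    ∑ x ∈ C, ((t : ℝ)⁻¹) ^ mult L x ≤ 1 := by
  induction L using Finset.induction_on generalizing C with
  | empty =>
    have hC1 : C.card ≤ 1 := Finset.card_le_one.mpr fun x hx y hy => by
      by_contra hxy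
      obtain ⟨f, hf, -⟩ := hC hx hy hxy
      exact Finset.notMem_empty f hf
    simpa [mult_empty] using hC1
  | insert f L hf ih =>
    have htR : (0 : ℝ) < t := by exact_mod_cast ht
    set w : α → ℝ := fun x => ((t : ℝ)⁻¹) ^ mult (insert f L) x
    have block (v : Fin t) :
        ∑ x ∈ C with f x = none, w x + ∑ x ∈ C with f x = some v, t * w x ≤ 1 := by
      have hsep : ((C.filter fun x => f x = none ∨ f x = some v) : Set α).Pairwise
          fun x y => ∃ g ∈ L, Distinguishes g x y := by
        intro x hx y hy hxy
        obtain ⟨g, hg, hgxy⟩ := hC (Finset.mem_filter.mp hx).1 (Finset.mem_filter.mp hy).1 hxy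
        rcases Finset.mem_insert.mp hg with rfl | hg
        · obtain ⟨a, b, hga, hgb, hab⟩ := hgxy
          have hxv := (Finset.mem_filter.mp hx).2
          have hyv := (Finset.mem_filter.mp hy).2
          simp only [hga, hgb, reduceCtorEq, Option.some.injEq, false_or] at hxv hyv
          exact absurd (hxv.trans hyv.symm) hab
        · exact ⟨g, hg, hgxy⟩
      have hdisj : Disjoint (C.filter fun x => f x = none) (C.filter fun x => f x = some v) :=
        Finset.disjoint_filter.mpr fun x _ hnone hsome => by simp [hnone] at hsome
      calc ∑ x ∈ C with f x = none, w x + ∑ x ∈ C with f x = some v, t * w x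
          = ∑ x ∈ C with f x = none ∨ f x = some v, ((t : ℝ)⁻¹) ^ mult L x := by
            rw [Finset.filter_or, Finset.sum_union hdisj]
            congr 1 <;> refine Finset.sum_congr rfl fun x hx => ?_
            · simp [w, mult_insert hf, (Finset.mem_filter.mp hx).2]
            · simp [w, mult_insert hf, (Finset.mem_filter.mp hx).2, pow_succ, htR.ne']
        _ ≤ 1 := ih _ hsep
    have hfibres : ∑ x ∈ C, w x = ∑ x ∈ C with f x = none, w x
        + ∑ v : Fin t, ∑ x ∈ C with f x = some v, w x := by
      rw [← Finset.sum_fiberwise C f w, Fintype.sum_option]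
    have : (t : ℝ) * ∑ x ∈ C, w x ≤ t := by
      calc (t : ℝ) * ∑ x ∈ C, w x
          = ∑ v : Fin t, (∑ x ∈ C with f x = none, w x
              + ∑ x ∈ C with f x = some v, t * w x) := by
            simp only [Finset.sum_add_distrib, Finset.sum_const, Finset.card_univ,
              Fintype.card_fin, nsmul_eq_mul, ← Finset.mul_sum, hfibres, mul_add]
        _ ≤ ∑ _v : Fin t, (1 : ℝ) := Finset.sum_le_sum fun v _ => block v
        _ = t := by simp
    exact (mul_le_iff_le_one_right htR).mp this

end Kraft

theorem card_le_pow_of_isLocalRealiser {P : Type*} [PartialOrder P] [Fintype P] {t d : ℕ}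
    (ht : 0 < t) {L : Finset (P → Option (Fin t))} (hL : IsLocalRealiser L)
    (hd : ∀ x, mult L x ≤ d) : Fintype.card P ≤ t ^ d := by
  have hC : ((Finset.univ : Finset P) : Set P).Pairwise fun x y => ∃ f ∈ L, Distinguishes f x y := by
    intro x _ y _ hxy
    by_cases hyx : y ≤ x
    · obtain ⟨f, hf, hsep⟩ := hL.2 y x fun hxy' => hxy (le_antisymm hxy' hyx)
      exact ⟨f, hf, hsep.distinguishes.symm⟩
    · obtain ⟨f, hf, hsep⟩ := hL.2 x y hyx
      exact ⟨f, hf, hsep.distinguishes⟩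
  have hq1 : (t : ℝ)⁻¹ ≤ 1 := inv_le_one_of_one_le₀ (by exact_mod_cast ht)
  have hkraft : (Fintype.card P : ℝ) * ((t : ℝ)⁻¹) ^ d ≤ 1 :=
    calc (Fintype.card P : ℝ) * ((t : ℝ)⁻¹) ^ d = ∑ _x : P, ((t : ℝ)⁻¹) ^ d := by simp
      _ ≤ ∑ x : P, ((t : ℝ)⁻¹) ^ mult L x :=
        Finset.sum_le_sum fun x _ => pow_le_pow_of_le_one (by positivity) hq1 (hd x)
      _ ≤ 1 := sum_inv_pow_mult_le_one ht L _ hC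
  rw [inv_pow, ← div_eq_mul_inv, div_le_one (by positivity)] at hkraft
  exact_mod_cast hkraft

lemma Nat.mod_le_mod_iff_of_div_eq {a b t : ℕ} (h : a / t = b / t) :
    a % t ≤ b % t ↔ a ≤ b := by
  have ha := Nat.div_add_mod a t
  have hb := Nat.div_add_mod b t
  rw [h] at ha
  omega

lemma Nat.mod_lt_mod_iff_of_div_eq {a b t : ℕ} (h : a / t = b / t) :
    a % t < b % t ↔ a < b := by
  simpa only [not_le] using (Nat.mod_le_mod_iff_of_div_eq h.symm).not

lemma Nat.div_pow_succ (a t k : ℕ) : a / t ^ (k + 1) = a / t ^ k / t := by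
  rw [pow_succ, Nat.div_div_eq_div_mul]

lemma Nat.exists_digit_lt_of_lt {u w t : ℕ} (huw : u < w) :
    ∀ {d : ℕ}, u / t ^ d = w / t ^ d →
      ∃ k < d, u / t ^ (k + 1) = w / t ^ (k + 1) ∧ u / t ^ k % t < w / t ^ k % t
  | 0, h => by simp at h; omega
  | d + 1, h => by
    by_cases hd : u / t ^ d = w / t ^ d
    · obtain ⟨k, hk, hk'⟩ := Nat.exists_digit_lt_of_lt huw hd
      exact ⟨k, hk.trans d.lt_succ_self, hk'⟩
    · refine ⟨d, d.lt_succ_self, h, ?_⟩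
      rw [Nat.div_pow_succ, Nat.div_pow_succ] at h
      exact (Nat.mod_lt_mod_iff_of_div_eq h).mpr
        ((Nat.div_le_div_right huw.le).lt_of_ne hd)

section Digits

variable {n t : ℕ} (ht : 0 < t)

/-- Digit `k` in base `t`, on the block of numbers whose digits above `k` spell `b`. -/
def digitFun (k b : ℕ) : Fin n → Option (Fin t) := fun x =>
  if (x : ℕ) / t ^ (k + 1) = b then some ⟨x / t ^ k % t, Nat.mod_lt _ ht⟩ else none

lemma digitFun_eq_some {k b : ℕ} {x : Fin n} {a : Fin t} :
    digitFun ht k b x = some a ↔ (x : ℕ) / t ^ (k + 1) = b ∧ (a : ℕ) = x / t ^ k % t := by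
  unfold digitFun
  split_ifs with hx <;> simp [hx, Fin.ext_iff, eq_comm]

lemma monotonePartial_digitFun (k b : ℕ) : MonotonePartial (digitFun (n := n) ht k b) := by
  intro x y hxy a c hxa hyc
  obtain ⟨hxb, ha⟩ := (digitFun_eq_some ht).mp hxa
  obtain ⟨hyb, hc⟩ := (digitFun_eq_some ht).mp hyc
  rw [← hyb, Nat.div_pow_succ, Nat.div_pow_succ] at hxb
  rw [Fin.le_iff_val_le_val, ha, hc]
  exact (Nat.mod_le_mod_iff_of_div_eq hxb).mpr (Nat.div_le_div_right hxy)

def digitRealiser (n d : ℕ) : Finset (Fin n → Option (Fin t)) :=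
  (Finset.range d ×ˢ Finset.range n).image fun p => digitFun ht p.1 p.2

lemma isLocalRealiser_digitRealiser {d : ℕ} (hn : n ≤ t ^ d) :
    IsLocalRealiser (digitRealiser ht n d) := by
  refine ⟨fun f hf => ?_, fun x y hxy => ?_⟩
  · obtain ⟨p, -, rfl⟩ := Finset.mem_image.mp hf
    exact monotonePartial_digitFun ht p.1 p.2
  · have htop : (x : ℕ) / t ^ d = y / t ^ d := by
      rw [Nat.div_eq_of_lt (x.isLt.trans_le hn), Nat.div_eq_of_lt (y.isLt.trans_le hn)]
    obtain ⟨k, hk, hblock, hdigit⟩ := Nat.exists_digit_lt_of_lt (not_le.mp hxy) htop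
    refine ⟨digitFun ht k (x / t ^ (k + 1)), Finset.mem_image.mpr ⟨(k, x / t ^ (k + 1)), ?_, rfl⟩,
      ⟨_, Nat.mod_lt _ ht⟩, ⟨_, Nat.mod_lt _ ht⟩, (digitFun_eq_some ht).mpr ⟨rfl, rfl⟩,
      (digitFun_eq_some ht).mpr ⟨hblock.symm, rfl⟩, hdigit⟩
    exact Finset.mem_product.mpr ⟨Finset.mem_range.mpr hk,
      Finset.mem_range.mpr ((Nat.div_le_self _ _).trans_lt x.isLt)⟩

lemma mult_digitRealiser_le (d : ℕ) (x : Fin n) : mult (digitRealiser ht n d) x ≤ d := by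
  have hsub : (digitRealiser ht n d).filter (fun f => (f x).isSome) ⊆
      (Finset.range d).image fun k => digitFun ht k (x / t ^ (k + 1)) := by
    intro f hf
    obtain ⟨hf, hfx⟩ := Finset.mem_filter.mp hf
    obtain ⟨⟨k, b⟩, hkb, rfl⟩ := Finset.mem_image.mp hf
    obtain ⟨a, ha⟩ := Option.isSome_iff_exists.mp hfx
    obtain ⟨hb, -⟩ := (digitFun_eq_some ht).mp ha
    exact Finset.mem_image.mpr ⟨k, (Finset.mem_product.mp hkb).1, by rw [hb]⟩
  calc mult (digitRealiser ht n d) x ≤ ((Finset.range d).image _).card := Finset.card_le_card hsub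
    _ ≤ d := Finset.card_image_le.trans (Finset.card_range d).le

end Digits

theorem ltdim_chain_general (n t : ℕ) (ht : 2 ≤ t) :
    ltdim t (Fin n) = Nat.clog t n := by
  have ht0 : 0 < t := by omega
  have hclog : n ≤ t ^ Nat.clog t n := Nat.le_pow_clog ht n
  have hupper : Nat.clog t n ∈ {d | ∃ L : Finset (Fin n → Option (Fin t)),
      IsLocalRealiser L ∧ ∀ x, mult L x ≤ d} :=
    ⟨_, isLocalRealiser_digitRealiser ht0 hclog, mult_digitRealiser_le ht0 _⟩
  refine le_antisymm (Nat.sInf_le hupper) (le_csInf ⟨_, hupper⟩ ?_)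
  rintro d ⟨L, hL, hd⟩
  rw [Nat.clog_le_iff_le_pow ht]
  simpa using card_le_pow_of_isLocalRealiser ht0 hL hd

/-- the local `t`-dimension of the `n`-element chain is `⌈log_t n⌉`. -/
theorem ltdim_chain (n t : ℕ) (hn : 1 ≤ n) (ht : 2 ≤ t) :
    ltdim t (Fin n) = Nat.clog t n :=
  ltdim_chain_general n t ht
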